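/- (Key step of the Iterated Major Order Theorem for Kemeny's rule) Let V be an election over a finite set C of alternatives and let U be a set of ordered pairs of distinct alternatives such that for every (a,b) ∈ U, a is ranked before b in every 2-wise median of V. Let x, y be distinct alternatives and set L_{x,y} = {z ∈ C : (z,x) ∈ U and (z,y) ∈ U}, R_{x,y} = {z ∈ C : (x,z) ∈ U and (y,z) ∈ U}, and Z' = C ∖ (L_{x,y} ∪ R_{x,y} ∪ {x,y}). If 2δ_{xy} > Σ_{z ∈ Z'} max(0, δ_{yz} + δ_{zx}), then x is ranked before y in every 2-wise median of V. -/

import Mathlib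

open Finset

variable {α : Type}

/-- A ranking of the alternatives: a duplicate-free list containing every
alternative; earlier in the list means more preferred. -/
def IsRanking (l : List α) : Prop := l.Nodup ∧ ∀ a : α, a ∈ l

/-- The 3-wise Kendall tau distance between two rankings: the number of subsets
`S` with `|S| ≤ 3` on which the two rankings have different top elements. -/
def d3 [Fintype α] [DecidableEq α] (l m : List α) : ℕ :=
  ((Finset.univ : Finset α).powerset.filter
    (fun S => S.card ≤ 3 ∧ ∃ a ∈ S, ∃ b ∈ S, a ≠ b ∧
      (∀ c ∈ S, l.idxOf a ≤ l.idxOf c) ∧ (∀ c ∈ S, m.idxOf b ≤ m.idxOf c))).card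

/-- Total 3-wise Kendall tau distance from a ranking to a voting profile. -/
def d3V [Fintype α] [DecidableEq α] (l : List α) (V : Multiset (List α)) : ℕ :=
  (V.map (fun v => d3 l v)).sum

/-- A 3-wise median of the voting profile `V`. -/
def IsMedian3 [Fintype α] [DecidableEq α] (V : Multiset (List α)) (l : List α) : Prop :=
  IsRanking l ∧ ∀ m : List α, IsRanking m → d3V l V ≤ d3V m V

/-- The 2-wise Kendall tau distance between two rankings: the number of
two-element subsets on which the relative orders differ. -/
def d2 [Fintype α] [DecidableEq α] (l m : List α) : ℕ :=
  ((Finset.univ : Finset α).powerset.filter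
    (fun S => S.card = 2 ∧ ∃ a ∈ S, ∃ b ∈ S,
      l.idxOf a < l.idxOf b ∧ m.idxOf b < m.idxOf a)).card

/-- Total 2-wise Kendall tau distance from a ranking to a voting profile. -/
def d2V [Fintype α] [DecidableEq α] (l : List α) (V : Multiset (List α)) : ℕ :=
  (V.map (fun v => d2 l v)).sum

/-- A 2-wise median of the voting profile `V`. -/
def IsMedian2 [Fintype α] [DecidableEq α] (V : Multiset (List α)) (l : List α) : Prop :=
  IsRanking l ∧ ∀ m : List α, IsRanking m → d2V l V ≤ d2V m V

/-- `x ≥ₛ y`: `x` is ranked before `y` in at least `s·|V|` votes. -/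
def geq [DecidableEq α] (V : Multiset (List α)) (s : ℝ) (x y : α) : Prop :=
  s * (V.card : ℝ) ≤ (V.countP (fun v => v.idxOf x < v.idxOf y) : ℝ)

/-- `x` is a non-dirty alternative with respect to the threshold `s`. -/
def NonDirty [DecidableEq α] (V : Multiset (List α)) (s : ℝ) (x : α) : Prop :=
  ∀ y : α, y ≠ x → geq V s x y ∨ geq V s y x

/-- The election satisfies the `3/4`-majority rule with respect to the 3-wise
Kemeny voting scheme. -/
def Satisfies34 [Fintype α] [DecidableEq α] (V : Multiset (List α)) : Prop :=
  ∀ x : α, NonDirty V (3/4) x → ∀ y : α, y ≠ x →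
    (geq V (3/4) x y → ∀ π : List α, IsMedian3 V π → π.idxOf x < π.idxOf y) ∧
    (geq V (3/4) y x → ∀ π : List α, IsMedian3 V π → π.idxOf y < π.idxOf x)

/-- `n_{xy}`: the number of votes ranking `x` before `y`. -/
def nn2 [DecidableEq α] (V : Multiset (List α)) (x y : α) : ℕ :=
  V.countP (fun v => v.idxOf x < v.idxOf y)

/-- `n_{xyz}`: the number of votes ranking `x` before `y` before `z`. -/
def nn3 [DecidableEq α] (V : Multiset (List α)) (x y z : α) : ℕ :=
  V.countP (fun v => v.idxOf x < v.idxOf y ∧ v.idxOf y < v.idxOf z)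

/-- `n_{xyzt}`: the number of votes ranking `x` before `y` before `z` before `t`. -/
def nn4 [DecidableEq α] (V : Multiset (List α)) (x y z t : α) : ℕ :=
  V.countP (fun v => v.idxOf x < v.idxOf y ∧ v.idxOf y < v.idxOf z ∧
    v.idxOf z < v.idxOf t)

/-- `δ_{xy} = n_{xy} - n_{yx}`. -/
def del [DecidableEq α] (V : Multiset (List α)) (x y : α) : ℤ :=
  (nn2 V x y : ℤ) - nn2 V y x

/-- `P_{x,y,z}`. -/
def Pq [DecidableEq α] (V : Multiset (List α)) (x y z : α) : ℤ :=
  3 * (nn3 V x z y : ℤ) + nn3 V x y z + nn3 V z x y + nn3 V z y x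
    - 4 * nn3 V y z x - 2 * nn3 V y x z

/-- `Q_{x,y,z}`. -/
def Qq [DecidableEq α] (V : Multiset (List α)) (x y z : α) : ℤ :=
  (nn3 V x y z : ℤ) + nn3 V x z y - nn3 V y x z - nn3 V y z x

/-- `R_{y,x,z,t}`. -/
def Rr [DecidableEq α] (V : Multiset (List α)) (y x z t : α) : ℤ :=
  2 * (nn4 V y z t x : ℤ) + 2 * nn4 V y z x t + nn4 V y t z x + nn4 V y t x z

/-- `S_{y,x,z,t} = R_{y,x,z,t} - R_{x,y,z,t}`. -/
def Ss [DecidableEq α] (V : Multiset (List α)) (y x z t : α) : ℤ :=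
  Rr V y x z t - Rr V x y z t

/-! If a median `π` ranked `y` before `x`, write `π = A ++ y :: (B ++ x :: C)`. Transposing two
adjacent alternatives `u, v` changes the Kemeny score by `δ_{uv}`, so moving `x` to just before `y`
changes it by `δ_{yx} + ∑_{z ∈ B} δ_{zx}`, and moving `y` to just after `x` by
`δ_{yx} + ∑_{z ∈ B} δ_{yz}`. By minimality both are nonnegative, and adding them gives
`2 δ_{xy} ≤ ∑_{z ∈ B} (δ_{yz} + δ_{zx})`. An alternative between `y` and `x` in a median lies in
neither `L_{x,y}` nor `R_{x,y}`, so `B ⊆ Z'`, against the hypothesis. -/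

section List

variable [DecidableEq α]

theorem List.idxOf_lt_idxOf_of_mem_append {s t : List α} {a b : α} (hl : (s ++ t).Nodup)
    (ha : a ∈ s) (hb : b ∈ t) : (s ++ t).idxOf a < (s ++ t).idxOf b := by
  have hbs : b ∉ s := fun hbs => List.disjoint_of_nodup_append hl hbs hb
  rw [List.idxOf_append_of_mem ha, List.idxOf_append_of_notMem hbs]
  have := List.idxOf_lt_length_of_mem ha
  omega

theorem List.exists_eq_append_cons_append_cons {l : List α} {x y : α} (hl : l.Nodup)
    (hx : x ∈ l) (h : l.idxOf y < l.idxOf x) : ∃ A B C, l = A ++ y :: (B ++ x :: C) := by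
  have hy : y ∈ l := List.idxOf_lt_length_iff.1 (h.trans_le List.idxOf_le_length)
  obtain ⟨A, T, rfl⟩ := List.append_of_mem hy
  rcases List.mem_append.1 hx with hxA | hxT
  · exact absurd h (List.idxOf_lt_idxOf_of_mem_append hl hxA List.mem_cons_self).not_gt
  · rcases List.mem_cons.1 hxT with rfl | hxT
    · exact absurd h (lt_irrefl _)
    · obtain ⟨B, C, rfl⟩ := List.append_of_mem hxT
      exact ⟨A, B, C, rfl⟩

theorem List.idxOf_between_of_mem_middle {A B C : List α} {x y z : α}
    (hl : (A ++ y :: (B ++ x :: C)).Nodup) (hz : z ∈ B) :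
    (A ++ y :: (B ++ x :: C)).idxOf y < (A ++ y :: (B ++ x :: C)).idxOf z ∧
      (A ++ y :: (B ++ x :: C)).idxOf z < (A ++ y :: (B ++ x :: C)).idxOf x := by
  constructor
  · simpa using List.idxOf_lt_idxOf_of_mem_append (s := A ++ [y]) (t := B ++ x :: C)
      (by simpa using hl) (by simp) (by simp [hz])
  · simpa using List.idxOf_lt_idxOf_of_mem_append (s := A ++ y :: B) (t := x :: C)
      (by simpa using hl) (by simp [hz]) (by simp)

theorem List.sum_map_le_sum_max_zero {M : Type*} [AddCommMonoid M] [LinearOrder M]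
    [IsOrderedAddMonoid M] {B : List α} (hB : B.Nodup) {s : Finset α}
    (hs : B.toFinset ⊆ s) (f : α → M) : (B.map f).sum ≤ ∑ z ∈ s, max 0 (f z) :=
  calc (B.map f).sum = ∑ z ∈ B.toFinset, f z := (List.sum_toFinset f hB).symm
    _ ≤ ∑ z ∈ B.toFinset, max 0 (f z) := sum_le_sum fun _ _ => le_max_right _ _
    _ ≤ ∑ z ∈ s, max 0 (f z) := sum_le_sum_of_subset_of_nonneg hs fun _ _ _ => le_max_left _ _

theorem List.idxOf_append_cons_cons_swap {P Q : List α} {u v : α} (huv : u ≠ v)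
    (hu : u ∉ P) (hv : v ∉ P) (a : α) :
    (P ++ v :: u :: Q).idxOf a =
      Equiv.swap P.length (P.length + 1) ((P ++ u :: v :: Q).idxOf a) := by
  by_cases haP : a ∈ P
  · have := List.idxOf_lt_length_of_mem haP
    rw [List.idxOf_append_of_mem haP, List.idxOf_append_of_mem haP,
      Equiv.swap_apply_of_ne_of_ne (by omega) (by omega)]
  rw [List.idxOf_append_of_notMem haP, List.idxOf_append_of_notMem haP]
  by_cases hau : a = u
  · subst hau
    simp [List.idxOf_cons_ne _ huv.symm]
  by_cases hav : a = v
  · subst hav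
    simp [List.idxOf_cons_ne _ huv]
  simp only [List.idxOf_cons_ne _ (Ne.symm hau), List.idxOf_cons_ne _ (Ne.symm hav)]
  rw [Equiv.swap_apply_of_ne_of_ne (by omega) (by omega)]

end List

theorem Equiv.swap_succ_lt_swap_succ_iff {n i j : ℕ} :
    Equiv.swap n (n + 1) i < Equiv.swap n (n + 1) j ↔
      (i = n + 1 ∧ j = n) ∨ (¬(i = n ∧ j = n + 1) ∧ i < j) := by
  simp only [Equiv.swap_apply_def]
  split_ifs <;> omega

theorem IsRanking.perm {l l' : List α} (h : IsRanking l) (hp : l.Perm l') : IsRanking l' :=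
  ⟨hp.nodup_iff.1 h.1, fun a => hp.mem_iff.1 (h.2 a)⟩

theorem del_add_del_swap [DecidableEq α] (V : Multiset (List α)) (a b : α) :
    del V a b + del V b a = 0 := by
  simp only [del, sub_add_sub_cancel, sub_self]

section Kemeny

variable [Fintype α] [DecidableEq α]

theorem d2_eq_card_inversions (l m : List α) :
    d2 l m = #{p : α × α | l.idxOf p.1 < l.idxOf p.2 ∧ m.idxOf p.2 < m.idxOf p.1} := by
  rw [d2]
  symm
  refine Finset.card_nbij (fun p => {p.1, p.2}) ?_ ?_ ?_
  · rintro ⟨a, b⟩ hab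
    simp only [coe_filter, Set.mem_ofPred_eq, Finset.mem_univ, true_and] at hab
    have hne : a ≠ b := by rintro rfl; exact lt_irrefl _ hab.1
    simp only [coe_filter, Set.mem_ofPred_eq, mem_powerset, subset_univ, true_and]
    exact ⟨card_pair hne, a, by simp, b, by simp, hab⟩
  · rintro ⟨a, b⟩ hab ⟨c, d⟩ hcd (h : ({a, b} : Finset α) = {c, d})
    simp only [coe_filter, Set.mem_ofPred_eq, Finset.mem_univ, true_and] at hab hcd
    have ha : a ∈ ({c, d} : Finset α) := h ▸ mem_insert_self a {b}
    have hb : b ∈ ({c, d} : Finset α) := h ▸ mem_insert_of_mem (mem_singleton_self b)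
    simp only [mem_insert, mem_singleton] at ha hb
    rcases ha with rfl | rfl <;> rcases hb with rfl | rfl <;> grind
  · intro S hS
    simp only [coe_filter, Set.mem_ofPred_eq, mem_powerset, subset_univ, true_and] at hS
    obtain ⟨hcard, a, ha, b, hb, hab⟩ := hS
    have hne : a ≠ b := by rintro rfl; exact lt_irrefl _ hab.1
    refine ⟨(a, b), by simpa using hab, ?_⟩
    exact (eq_of_subset_of_card_le (insert_subset ha (singleton_subset_iff.2 hb))
      (by rw [hcard, card_pair hne]))

theorem d2V_eq_sum_nn2 (l : List α) (V : Multiset (List α)) :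
    d2V l V = ∑ p : α × α with l.idxOf p.1 < l.idxOf p.2, nn2 V p.2 p.1 := by
  induction V using Multiset.induction with
  | empty => simp [d2V, nn2]
  | cons v V ih =>
    simp only [d2V, nn2, Multiset.map_cons, Multiset.sum_cons, Multiset.countP_cons] at ih ⊢
    rw [ih, d2_eq_card_inversions, ← filter_filter, card_filter, ← sum_add_distrib]
    exact sum_congr rfl fun p _ => by split_ifs <;> omega

theorem d2V_append_cons_cons_swap (V : Multiset (List α)) {P Q : List α} {u v : α}
    (huv : u ≠ v) (hu : u ∉ P) (hv : v ∉ P) :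
    (d2V (P ++ v :: u :: Q) V : ℤ) = d2V (P ++ u :: v :: Q) V + del V u v := by
  set l := P ++ u :: v :: Q
  have hidx_u : l.idxOf u = P.length := by simp [l, List.idxOf_append_of_notMem hu]
  have hidx_v : l.idxOf v = P.length + 1 := by
    simp [l, List.idxOf_append_of_notMem hv, List.idxOf_cons_ne _ huv]
  have hu_mem : u ∈ l := by simp [l]
  have hv_mem : v ∈ l := by simp [l]
  have hbefore (a b : α) : (P ++ v :: u :: Q).idxOf a < (P ++ v :: u :: Q).idxOf b ↔
      (a = v ∧ b = u) ∨ (¬(a = u ∧ b = v) ∧ l.idxOf a < l.idxOf b) := by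
    rw [List.idxOf_append_cons_cons_swap huv hu hv, List.idxOf_append_cons_cons_swap huv hu hv,
      Equiv.swap_succ_lt_swap_succ_iff]
    have := List.idxOf_inj (y := a) hu_mem
    have := List.idxOf_inj (y := a) hv_mem
    have := List.idxOf_inj (y := b) hu_mem
    have := List.idxOf_inj (y := b) hv_mem
    grind
  set F : Finset (α × α) := {p | l.idxOf p.1 < l.idxOf p.2}
  have hfilter : ({p | (P ++ v :: u :: Q).idxOf p.1 < (P ++ v :: u :: Q).idxOf p.2} :
      Finset (α × α)) = insert (v, u) (F.erase (u, v)) := by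
    ext ⟨a, b⟩
    simp only [F, mem_filter, mem_univ, true_and, mem_insert, mem_erase, hbefore, ne_eq,
      Prod.mk.injEq]
  have hvu : (v, u) ∉ F.erase (u, v) := by simp [F, hidx_u, hidx_v]
  have huv_mem : (u, v) ∈ F := by simp [F, hidx_u, hidx_v]
  have := sum_erase_add _ (fun p : α × α => nn2 V p.2 p.1) huv_mem
  rw [d2V_eq_sum_nn2, d2V_eq_sum_nn2, hfilter, sum_insert hvu, ← this, del]
  push_cast
  ring

theorem d2V_append_cons_append (V : Multiset (List α)) (x : α) (Q : List α) :
    ∀ (P M : List α), (P ++ x :: (M ++ Q)).Nodup →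
      (d2V (P ++ x :: (M ++ Q)) V : ℤ) = d2V (P ++ M ++ x :: Q) V + (M.map (del V · x)).sum
  | P, [], _ => by simp
  | P, m :: M, hl => by
    have hl' : (P ++ [m] ++ x :: (M ++ Q)).Nodup := by
      refine (List.Perm.nodup_iff ?_).1 hl
      simpa using (List.Perm.swap m x (M ++ Q)).append_left P
    obtain ⟨-, hxmR, hdisj⟩ := List.nodup_append.1 hl
    have hmP : m ∉ P := fun h => hdisj _ h _ (by simp) rfl
    have hxP : x ∉ P := fun h => hdisj _ h _ (by simp) rfl
    have hxm : m ≠ x := fun h => (List.nodup_cons.1 hxmR).1 (by simp [h])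
    have ih := d2V_append_cons_append V x Q (P ++ [m]) M hl'
    simp only [List.append_assoc, List.cons_append, List.nil_append] at ih ⊢
    rw [d2V_append_cons_cons_swap V hxm hmP hxP, ih, List.map_cons, List.sum_cons]
    ring

theorem two_mul_del_le_sum_of_isMedian2 {V : Multiset (List α)} {A B C : List α} {x y : α}
    (hπ : IsMedian2 V (A ++ y :: (B ++ x :: C))) :
    2 * del V x y ≤ (B.map fun z => del V y z + del V z x).sum := by
  obtain ⟨hrank, hmin⟩ := hπ
  have hperm_left : (A ++ y :: (B ++ x :: C)).Perm (A ++ x :: (y :: B ++ C)) :=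
    (List.perm_middle (l₁ := y :: B)).append_left A
  have hperm_right : (A ++ y :: (B ++ x :: C)).Perm (A ++ (B ++ [x]) ++ y :: C) := by
    simpa using (List.perm_middle (l₁ := B ++ [x]) (a := y) (l₂ := C)).symm.append_left A
  have hleft := d2V_append_cons_append V x C A (y :: B) (hrank.perm hperm_left).1
  have hright := d2V_append_cons_append V y C A (B ++ [x]) (by simpa using hrank.1)
  have hle_left : (d2V (A ++ y :: (B ++ x :: C)) V : ℤ) ≤ d2V (A ++ x :: (y :: B ++ C)) V := by
    exact_mod_cast hmin _ (hrank.perm hperm_left)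
  have hle_right :
      (d2V (A ++ y :: (B ++ x :: C)) V : ℤ) ≤ d2V (A ++ (B ++ [x]) ++ y :: C) V := by
    exact_mod_cast hmin _ (hrank.perm hperm_right)
  simp only [List.append_assoc, List.cons_append, List.nil_append, List.map_cons, List.map_nil,
    List.map_append, List.sum_cons, List.sum_nil, List.sum_append]
    at hleft hright hle_left hle_right
  have hxy := del_add_del_swap V x y
  have hB : (B.map (del V y)).sum + (B.map (del V · y)).sum = 0 := by
    simp [← List.sum_map_add, del_add_del_swap]
  rw [List.sum_map_add]
  linarith

end Kemeny

theorem stmt18_general [Fintype α] [DecidableEq α]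
    (V : Multiset (List α))
    (U : Finset (α × α))
    (hU : ∀ p ∈ U, p.1 ≠ p.2 ∧
      ∀ π : List α, IsMedian2 V π → π.idxOf p.1 < π.idxOf p.2)
    (x y : α) (hxy : x ≠ y)
    (hsum : 2 * del V x y >
      ∑ z ∈ (Finset.univ : Finset α) \
        ((Finset.univ.filter fun w => (w, x) ∈ U ∧ (w, y) ∈ U) ∪
          (Finset.univ.filter fun w => (x, w) ∈ U ∧ (y, w) ∈ U) ∪ {x, y}),
        max 0 (del V y z + del V z x)) :
    ∀ π : List α, IsMedian2 V π → π.idxOf x < π.idxOf y := by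
  intro π hπ
  by_contra hxy_order
  have hyx : π.idxOf y < π.idxOf x := (not_lt.1 hxy_order).lt_of_ne
    fun h => hxy ((List.idxOf_inj (hπ.1.2 x)).1 h.symm)
  obtain ⟨A, B, C, rfl⟩ := List.exists_eq_append_cons_append_cons hπ.1.1 (hπ.1.2 x) hyx
  refine hsum.not_ge ((two_mul_del_le_sum_of_isMedian2 hπ).trans
    (List.sum_map_le_sum_max_zero (hπ.1.1.sublist
      (((List.sublist_append_left B (x :: C)).cons y).trans (List.sublist_append_right A _))) ?_ _))
  intro z hz
  obtain ⟨hyz, hzx⟩ := List.idxOf_between_of_mem_middle hπ.1.1 (List.mem_toFinset.1 hz)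
  simp only [mem_sdiff, mem_univ, true_and, mem_union, mem_filter, mem_insert, mem_singleton]
  rintro ((⟨-, hzy⟩ | ⟨hxz, -⟩) | rfl | rfl)
  · exact ((hU _ hzy).2 _ hπ).not_gt hyz
  · exact ((hU _ hxz).2 _ hπ).not_gt hzx
  · exact hzx.false
  · exact hyz.false

theorem stmt18 [Fintype α] [DecidableEq α]
    (V : Multiset (List α)) (hV : ∀ v ∈ V, IsRanking v)
    (U : Finset (α × α))
    (hU : ∀ p ∈ U, p.1 ≠ p.2 ∧
      ∀ π : List α, IsMedian2 V π → π.idxOf p.1 < π.idxOf p.2)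
    (x y : α) (hxy : x ≠ y)
    (hsum : 2 * del V x y >
      ∑ z ∈ (Finset.univ : Finset α) \
        ((Finset.univ.filter fun w => (w, x) ∈ U ∧ (w, y) ∈ U) ∪
          (Finset.univ.filter fun w => (x, w) ∈ U ∧ (y, w) ∈ U) ∪ {x, y}),
        max 0 (del V y z + del V z x)) :
    ∀ π : List α, IsMedian2 V π → π.idxOf x < π.idxOf y :=
  stmt18_general V U hU x y hxy hsum
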